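/- (Subgradient of the SPO+ loss used in the stochastic subgradient algorithm.) For every fixed y ∈ ℝ^d and every ŷ ∈ ℝ^d, the vector 2·(w*(y) − w*(2ŷ − y)) is a subgradient of the function ŷ ↦ ℓ_SPO+(ŷ, y) at ŷ; that is, for every u ∈ ℝ^d, ℓ_SPO+(u, y) ≥ ℓ_SPO+(ŷ, y) + ⟨2·(w*(y) − w*(2ŷ − y)), u − ŷ⟩. -/

import Mathlib

/-! The oracle makes every supremum in the SPO+ loss attained: the supremum at `v` equals
`⟪y - 2v, w*(2v - y)⟫`. Evaluating the supremum at `u` at the point `w*(2ŷ - y)` instead gives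
a lower bound on `ℓ_SPO+(u, y)` that is affine in `u` with slope `2 (w*(y) − w*(2ŷ − y))` and
that agrees with `ℓ_SPO+(ŷ, y)` at `u = ŷ`. -/

open MeasureTheory
open scoped RealInnerProductSpace

noncomputable section

/-- The SPO+ loss: `ℓ_SPO+(ŷ, y) = sup_{w ∈ S} ⟨y − 2ŷ, w⟩ + 2⟨ŷ, w*(y)⟩ − ⟨y, w*(y)⟩`. -/
def lSPOplus {d : ℕ} (S : Set (EuclideanSpace ℝ (Fin d)))
    (wStar : EuclideanSpace ℝ (Fin d) → EuclideanSpace ℝ (Fin d))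
    (yhat y : EuclideanSpace ℝ (Fin d)) : ℝ :=
  sSup ((fun w => ⟪y - (2 : ℝ) • yhat, w⟫) '' S) + 2 * ⟪yhat, wStar y⟫ - ⟪y, wStar y⟫

section InnerMinimizer

variable {E : Type*} [NormedAddCommGroup E] [InnerProductSpace ℝ E] {S : Set E}

theorem isGreatest_inner_neg_image_of_isMinOn {c w₀ : E} (hw₀ : w₀ ∈ S)
    (hmin : IsMinOn (fun w => ⟪c, w⟫) S w₀) :
    IsGreatest ((fun w => ⟪-c, w⟫) '' S) ⟪-c, w₀⟫ := by
  refine ⟨⟨w₀, hw₀, rfl⟩, ?_⟩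
  rintro _ ⟨w, hw, rfl⟩
  simpa only [inner_neg_left, neg_le_neg_iff] using isMinOn_iff.mp hmin w hw

theorem sSup_inner_neg_image_eq_of_isMinOn {c w₀ : E} (hw₀ : w₀ ∈ S)
    (hmin : IsMinOn (fun w => ⟪c, w⟫) S w₀) :
    sSup ((fun w => ⟪-c, w⟫) '' S) = ⟪-c, w₀⟫ :=
  (isGreatest_inner_neg_image_of_isMinOn hw₀ hmin).csSup_eq

end InnerMinimizer

theorem lSPOplus_eq_of_oracle {d : ℕ} {S : Set (EuclideanSpace ℝ (Fin d))}
    {wStar : EuclideanSpace ℝ (Fin d) → EuclideanSpace ℝ (Fin d)}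
    (hOracle : ∀ c : EuclideanSpace ℝ (Fin d),
      wStar c ∈ S ∧ ∀ w ∈ S, ⟪c, wStar c⟫ ≤ ⟪c, w⟫)
    (v y : EuclideanSpace ℝ (Fin d)) :
    lSPOplus S wStar v y =
      ⟪y - (2 : ℝ) • v, wStar ((2 : ℝ) • v - y)⟫ + 2 * ⟪v, wStar y⟫ - ⟪y, wStar y⟫ := by
  obtain ⟨hmem, hmin⟩ := hOracle ((2 : ℝ) • v - y)
  rw [lSPOplus, ← neg_sub ((2 : ℝ) • v) y, sSup_inner_neg_image_eq_of_isMinOn hmem hmin]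

theorem spoPlus_subgradient_general {d : ℕ} (S : Set (EuclideanSpace ℝ (Fin d)))
    (wStar : EuclideanSpace ℝ (Fin d) → EuclideanSpace ℝ (Fin d))
    (hOracle : ∀ c : EuclideanSpace ℝ (Fin d),
      wStar c ∈ S ∧ ∀ w ∈ S, ⟪c, wStar c⟫ ≤ ⟪c, w⟫)
    (y yhat : EuclideanSpace ℝ (Fin d)) :
    ∀ u : EuclideanSpace ℝ (Fin d),
      lSPOplus S wStar u y ≥ lSPOplus S wStar yhat y +
        ⟪(2 : ℝ) • (wStar y - wStar ((2 : ℝ) • yhat - y)), u - yhat⟫ := by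
  intro u
  set w₀ := wStar ((2 : ℝ) • yhat - y)
  have hw₀_le : ⟪y - (2 : ℝ) • u, w₀⟫ ≤ ⟪y - (2 : ℝ) • u, wStar ((2 : ℝ) • u - y)⟫ := by
    rw [← neg_sub ((2 : ℝ) • u) y]
    obtain ⟨hmem, hmin⟩ := hOracle ((2 : ℝ) • u - y)
    exact (isGreatest_inner_neg_image_of_isMinOn hmem hmin).2
      ⟨w₀, (hOracle ((2 : ℝ) • yhat - y)).1, rfl⟩
  have hexpand : ⟪y - (2 : ℝ) • yhat, w₀⟫ + 2 * ⟪yhat, wStar y⟫ +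
      ⟪(2 : ℝ) • (wStar y - w₀), u - yhat⟫ = ⟪y - (2 : ℝ) • u, w₀⟫ + 2 * ⟪u, wStar y⟫ := by
    simp only [inner_sub_left, inner_sub_right, real_inner_smul_left,
      real_inner_smul_right, real_inner_comm w₀, real_inner_comm (wStar y)]
    ring
  rw [lSPOplus_eq_of_oracle hOracle, lSPOplus_eq_of_oracle hOracle]
  linarith

/-- `2 (w*(y) − w*(2ŷ − y))` is a subgradient of `ŷ ↦ ℓ_SPO+(ŷ, y)` at `ŷ`. -/
theorem spoPlus_subgradient {d : ℕ} (S : Set (EuclideanSpace ℝ (Fin d)))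
    (hS : S.Nonempty) (hSc : IsCompact S)
    (wStar : EuclideanSpace ℝ (Fin d) → EuclideanSpace ℝ (Fin d))
    (hOracle : ∀ c : EuclideanSpace ℝ (Fin d),
      wStar c ∈ S ∧ ∀ w ∈ S, ⟪c, wStar c⟫ ≤ ⟪c, w⟫)
    (y yhat : EuclideanSpace ℝ (Fin d)) :
    ∀ u : EuclideanSpace ℝ (Fin d),
      lSPOplus S wStar u y ≥ lSPOplus S wStar yhat y +
        ⟪(2 : ℝ) • (wStar y - wStar ((2 : ℝ) • yhat - y)), u - yhat⟫ :=
  spoPlus_subgradient_general S wStar hOracle y yhat
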